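/- Assume W > 0 and 4I < zW. Then over all pairs (a,b) with a, b ∈ {−r/2, −r/2+1, …, r/2}, the function φ(a,b) = (W/4)(a+b)² − (W/4 − I/z)(a² + b²) attains its minimum exactly at the two pairs (−r/2, r/2) and (r/2, −r/2). -/

import Mathlib

/-! With `c = W/4 − I/z > 0` (from `4I < zW`) and `R = r/2`,
`φ(a,b) − φ(−R,R) = (W/4)(a+b)² + c(R² − a²) + c(R² − b²)`, a sum of nonnegative terms
on the charge set, which vanishes exactly when `a + b = 0` and `a² = R²`. -/

open Finset

/-- The nearest-neighbour bond potential
`φ(a,b) = (W/4)(a+b)² − (W/4 − I/z)(a² + b²)`. -/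
noncomputable def phi (z : ℕ) (I W : ℝ) (a b : ℝ) : ℝ :=
  W / 4 * (a + b) ^ 2 - (W / 4 - I / z) * (a ^ 2 + b ^ 2)

/-- The finite set `{j − r/2 : j = 0, 1, …, r}` of possible values of `Q_x = n_x − r/2`. -/
noncomputable def chargeSet (r : ℕ) : Finset ℝ :=
  (Finset.range (r + 1)).image (fun (j : ℕ) => (j : ℝ) - r / 2)

namespace chargeSet

lemma abs_le_of_mem {r : ℕ} {a : ℝ} (ha : a ∈ chargeSet r) : |a| ≤ r / 2 := by
  obtain ⟨j, hj, rfl⟩ := mem_image.mp ha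
  have hjr : (j : ℝ) ≤ r := by exact_mod_cast Nat.lt_succ_iff.mp (mem_range.mp hj)
  rw [abs_le]
  constructor <;> linarith [j.cast_nonneg (α := ℝ)]

lemma neg_half_mem (r : ℕ) : -(r / 2 : ℝ) ∈ chargeSet r :=
  mem_image.mpr ⟨0, mem_range.mpr r.succ_pos, by push_cast; ring⟩

lemma half_mem (r : ℕ) : (r / 2 : ℝ) ∈ chargeSet r :=
  mem_image.mpr ⟨r, mem_range.mpr r.lt_succ_self, by ring⟩

end chargeSet

section phi

variable {z : ℕ} {I W : ℝ}

lemma sub_div_pos_of_mul_lt (hW : 0 < W) (hIW : 4 * I < (z : ℝ) * W) : 0 < W / 4 - I / z := by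
  rcases z.eq_zero_or_pos with rfl | hz
  · simpa using hW
  · have hz' : (0 : ℝ) < z := by exact_mod_cast hz
    rw [sub_pos, div_lt_div_iff₀ hz' four_pos]
    linarith

lemma phi_sub_phi_neg_self (a b R : ℝ) :
    phi z I W a b - phi z I W (-R) R =
      W / 4 * (a + b) ^ 2 + (W / 4 - I / z) * ((R ^ 2 - a ^ 2) + (R ^ 2 - b ^ 2)) := by
  unfold phi; ring

lemma phi_comm (a b : ℝ) : phi z I W a b = phi z I W b a := by
  unfold phi; ring

variable {a b R : ℝ}

lemma sq_sub_sq_nonneg_of_abs_le (ha : |a| ≤ R) : 0 ≤ R ^ 2 - a ^ 2 :=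
  sub_nonneg.mpr (sq_le_sq' (abs_le.mp ha).1 (abs_le.mp ha).2)

lemma phi_neg_self_le (hW : 0 ≤ W) (hc : 0 ≤ W / 4 - I / z) (ha : |a| ≤ R) (hb : |b| ≤ R) :
    phi z I W (-R) R ≤ phi z I W a b := by
  rw [← sub_nonneg, phi_sub_phi_neg_self]
  have := add_nonneg (sq_sub_sq_nonneg_of_abs_le ha) (sq_sub_sq_nonneg_of_abs_le hb)
  positivity

lemma phi_eq_phi_neg_self_iff (hW : 0 < W) (hc : 0 < W / 4 - I / z)
    (ha : |a| ≤ R) (hb : |b| ≤ R) :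
    phi z I W a b = phi z I W (-R) R ↔ (a = -R ∧ b = R) ∨ (a = R ∧ b = -R) := by
  constructor
  · intro h
    have hsum := phi_sub_phi_neg_self (z := z) (I := I) (W := W) a b R
    have hRa := sq_sub_sq_nonneg_of_abs_le ha
    rw [h, sub_self, eq_comm, add_eq_zero_iff_of_nonneg (by positivity)
      (mul_nonneg hc.le (add_nonneg hRa (sq_sub_sq_nonneg_of_abs_le hb)))] at hsum
    obtain ⟨hab, hR⟩ := hsum
    have hb_eq : b = -a := by
      rw [mul_eq_zero, pow_eq_zero_iff two_ne_zero] at hab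
      exact eq_neg_of_add_eq_zero_right (hab.resolve_left (by positivity))
    have ha_sq : a ^ 2 = R ^ 2 := by
      rw [mul_eq_zero, or_iff_right hc.ne', add_eq_zero_iff_of_nonneg hRa
        (sq_sub_sq_nonneg_of_abs_le hb)] at hR
      exact (sub_eq_zero.mp hR.1).symm
    subst hb_eq
    rcases sq_eq_sq_iff_eq_or_eq_neg.mp ha_sq with rfl | rfl
    · exact Or.inr ⟨rfl, rfl⟩
    · exact Or.inl ⟨rfl, neg_neg R⟩
  · rintro (⟨rfl, rfl⟩ | ⟨rfl, rfl⟩)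
    · rfl
    · exact phi_comm _ _

end phi

theorem statement3_general (r z : ℕ) (I W : ℝ)
    (hW : 0 < W) (hIW : 4 * I < (z : ℝ) * W) :
    (-(r / 2) : ℝ) ∈ chargeSet r ∧ ((r / 2 : ℝ)) ∈ chargeSet r ∧
    ∀ a ∈ chargeSet r, ∀ b ∈ chargeSet r,
      phi z I W (-(r / 2)) (r / 2) ≤ phi z I W a b ∧
      (phi z I W a b = phi z I W (-(r / 2)) (r / 2) ↔
        (a = -(r / 2) ∧ b = (r / 2)) ∨ (a = (r / 2) ∧ b = -(r / 2))) := by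
  have hc := sub_div_pos_of_mul_lt hW hIW
  refine ⟨chargeSet.neg_half_mem r, chargeSet.half_mem r, fun a ha b hb => ?_⟩
  have ha' := chargeSet.abs_le_of_mem ha
  have hb' := chargeSet.abs_le_of_mem hb
  exact ⟨phi_neg_self_le hW.le hc.le ha' hb', phi_eq_phi_neg_self_iff hW hc ha' hb'⟩

/-- For `W > 0` and `4I < zW`, the minimum of `φ` over
`chargeSet r × chargeSet r` is attained exactly at `(−r/2, r/2)` and `(r/2, −r/2)`. -/
theorem statement3 (r z : ℕ) (hr : 2 ≤ r) (hz : 2 ≤ z) (I W : ℝ)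
    (hW : 0 < W) (hIW : 4 * I < (z : ℝ) * W) :
    (-(r / 2) : ℝ) ∈ chargeSet r ∧ ((r / 2 : ℝ)) ∈ chargeSet r ∧
    ∀ a ∈ chargeSet r, ∀ b ∈ chargeSet r,
      phi z I W (-(r / 2)) (r / 2) ≤ phi z I W a b ∧
      (phi z I W a b = phi z I W (-(r / 2)) (r / 2) ↔
        (a = -(r / 2) ∧ b = (r / 2)) ∨ (a = (r / 2) ∧ b = -(r / 2))) :=
  statement3_general r z I W hW hIW
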